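/- arXiv:2305.17275 — 3 statements merged into one kernel-verified Lean document; each statement's English description precedes it below -/
import Mathlib

section
/- Let n ≥ 1 and r ≥ 1, let s_1, …, s_r be positive reals, and let ζ_1, …, ζ_n be real random variables on a common probability space, not necessarily independent, such that each ζ_j has the same distribution as Σ_{l=1}^r s_l·X_l² where X_1, …, X_r are i.i.d. standard real Gaussians. Set T := Σ_{l=1}^r s_l and σ := (Σ_{l=1}^r s_l²)^{1/2}. Then for every γ with 0 ≤ γ ≤ 1, P( min_{1≤j≤n} ζ_j ≥ T·(1−γ) ) ≥ 1 − n·exp( −T²·γ²/(4σ²) ). -/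
open MeasureTheory ProbabilityTheory

/-- The law of `Σ_l s_l X_l²` where `X_1, …, X_r` are i.i.d. standard real Gaussians. -/
noncomputable def chiSqCombo (r : ℕ) (s : Fin r → ℝ) : Measure ℝ :=
  Measure.map (fun x : Fin r → ℝ => ∑ l, s l * x l ^ 2)
    (Measure.pi fun _ : Fin r => gaussianReal 0 1)

/-! For `t ≥ 0`, `E exp(-t ζ_j) = ∏_l (1 + 2 t s_l)^(-1/2) ≤ exp(t² σ² - t T)` because
`log (1 + u) ≥ u - u² / 2`, so Chernoff's bound gives
`P(ζ_j ≤ T (1 - γ)) ≤ exp(-t T γ + t² σ²)`, which is `exp(-T² γ² / (4 σ²))` at `t = T γ / (2 σ²)`.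
A union bound over `j` only involves the marginal laws of the `ζ_j`. -/

open Real Set

lemma inv_sqrt_one_add_two_mul_le_exp {c : ℝ} (hc : 0 ≤ c) :
    (√(1 + 2 * c))⁻¹ ≤ exp (c ^ 2 - c) := by
  have hlog : 2 * c - 2 * c ^ 2 ≤ log (1 + 2 * c) := by
    refine le_trans ?_ (le_log_one_add_of_nonneg (by positivity : 0 ≤ 2 * c))
    rw [le_div_iff₀ (by positivity)]
    nlinarith [pow_nonneg hc 3]
  have hexp : exp (c - c ^ 2) ≤ √(1 + 2 * c) := by
    rw [le_sqrt (exp_pos _).le (by positivity), sq, ← exp_add, ← le_log_iff_exp_le (by positivity)]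
    linarith
  simpa only [← exp_neg, neg_sub] using inv_anti₀ (exp_pos _) hexp

lemma integral_exp_neg_mul_sq_gaussianReal {c : ℝ} (hc : 0 ≤ c) :
    ∫ x, exp (-c * x ^ 2) ∂gaussianReal 0 1 = (√(1 + 2 * c))⁻¹ := by
  have hpdf : ∀ x, gaussianPDFReal 0 1 x • exp (-c * x ^ 2)
      = (√(2 * π))⁻¹ * exp (-(c + 1 / 2) * x ^ 2) := by
    intro x
    rw [gaussianPDFReal_def, smul_eq_mul, mul_assoc, ← exp_add]
    simp only [NNReal.coe_one, mul_one, sub_zero]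
    ring_nf
  simp_rw [integral_gaussianReal_eq_integral_smul one_ne_zero, hpdf, integral_const_mul,
    integral_gaussian]
  have hπ : π / (c + 1 / 2) = 2 * π / (1 + 2 * c) := by
    field_simp
    ring
  rw [hπ, sqrt_div' _ (by positivity), div_eq_mul_inv, ← mul_assoc,
    inv_mul_cancel₀ (by positivity), one_mul]

section chiSqCombo

variable {r : ℕ} {s : Fin r → ℝ}

lemma measurable_weightedSumSq : Measurable fun x : Fin r → ℝ => ∑ l, s l * x l ^ 2 := by
  fun_prop

instance : IsProbabilityMeasure (chiSqCombo r s) :=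
  Measure.isProbabilityMeasure_map measurable_weightedSumSq.aemeasurable

lemma integral_exp_neg_mul_chiSqCombo (hs : ∀ l, 0 ≤ s l) {t : ℝ} (ht : 0 ≤ t) :
    ∫ y, exp (-t * y) ∂chiSqCombo r s = ∏ l, (√(1 + 2 * (t * s l)))⁻¹ := by
  have hprod : ∀ x : Fin r → ℝ,
      exp (-t * ∑ l, s l * x l ^ 2) = ∏ l, exp (-(t * s l) * x l ^ 2) := by
    intro x
    rw [← exp_sum, Finset.mul_sum]
    simp only [neg_mul, mul_assoc]
  rw [chiSqCombo, integral_map measurable_weightedSumSq.aemeasurable (by fun_prop)]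
  simp_rw [hprod]
  rw [integral_fintype_prod_eq_prod (fun l y => exp (-(t * s l) * y ^ 2))]
  exact Finset.prod_congr rfl fun l _ =>
    integral_exp_neg_mul_sq_gaussianReal (mul_nonneg ht (hs l))

lemma measureReal_chiSqCombo_Iic_le (hs : ∀ l, 0 ≤ s l) {t : ℝ} (ht : 0 ≤ t) (a : ℝ) :
    (chiSqCombo r s).real (Iic a) ≤ exp (t * a - t * ∑ l, s l + t ^ 2 * ∑ l, s l ^ 2) := by
  have hmgf := integral_exp_neg_mul_chiSqCombo hs ht
  -- a non-integrable function has Bochner integral `0`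
  have hint : Integrable (fun y => exp (-t * y)) (chiSqCombo r s) :=
    .of_integral_ne_zero <| by
      rw [hmgf]
      refine (Finset.prod_pos fun l _ => ?_).ne'
      have := mul_nonneg ht (hs l)
      positivity
  calc (chiSqCombo r s).real (Iic a)
      ≤ exp (t * a) * ∏ l, (√(1 + 2 * (t * s l)))⁻¹ := by
        refine (measure_le_le_exp_mul_mgf (X := id) a (neg_nonpos.2 ht) hint).trans_eq ?_
        rw [neg_neg, ← hmgf]
        rfl
    _ ≤ exp (t * a) * ∏ l, exp ((t * s l) ^ 2 - t * s l) := by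
        gcongr with l
        exact inv_sqrt_one_add_two_mul_le_exp (mul_nonneg ht (hs l))
    _ = exp (t * a - t * ∑ l, s l + t ^ 2 * ∑ l, s l ^ 2) := by
        rw [← exp_sum, ← exp_add, Finset.sum_sub_distrib]
        simp only [mul_pow, ← Finset.mul_sum]
        congr 1
        ring

lemma chiSqCombo_Iic_le_exp_neg_sq (hs : ∀ l, 0 ≤ s l) {γ : ℝ} (hγ : 0 ≤ γ) :
    chiSqCombo r s (Iic ((∑ l, s l) * (1 - γ))) ≤
      ENNReal.ofReal (exp (-((∑ l, s l) ^ 2 * γ ^ 2) / (4 * ∑ l, s l ^ 2))) := by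
  set T := ∑ l, s l
  set v := ∑ l, s l ^ 2
  have hT : 0 ≤ T := Finset.sum_nonneg fun l _ => hs l
  have hv : 0 ≤ v := Finset.sum_nonneg fun l _ => sq_nonneg (s l)
  -- `t` minimises the exponent; if `v = 0` then `t = 0` and the right side is `0` as well.
  set t := T * γ / (2 * v)
  have hexponent : t * (T * (1 - γ)) - t * T + t ^ 2 * v = -(T ^ 2 * γ ^ 2) / (4 * v) := by
    rcases hv.eq_or_lt with hv0 | hv0
    · simp [t, ← hv0]
    · simp only [t]
      field_simp
      ring
  rw [ENNReal.le_ofReal_iff_toReal_le (measure_ne_top _ _) (exp_pos _).le, ← hexponent]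
  exact measureReal_chiSqCombo_Iic_le hs (by positivity) _

end chiSqCombo

lemma ofReal_one_sub_card_mul_le_measure_iInter {Ω ι : Type*} [MeasurableSpace Ω]
    (P : Measure Ω) [IsProbabilityMeasure P] [Fintype ι] (A : ι → Set Ω) {ε : ℝ} (hε : 0 ≤ ε)
    (hA : ∀ i, P (A i)ᶜ ≤ ENNReal.ofReal ε) :
    ENNReal.ofReal (1 - Fintype.card ι * ε) ≤ P (⋂ i, A i) := by
  have hcompl : P (⋂ i, A i)ᶜ ≤ ENNReal.ofReal (Fintype.card ι * ε) :=
    calc P (⋂ i, A i)ᶜ = P (⋃ i, (A i)ᶜ) := by rw [compl_iInter]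
      _ ≤ ∑ i, P (A i)ᶜ := measure_iUnion_fintype_le P _
      _ ≤ ∑ _i : ι, ENNReal.ofReal ε := Finset.sum_le_sum fun i _ => hA i
      _ = ENNReal.ofReal (Fintype.card ι * ε) := by
        rw [Finset.sum_const, nsmul_eq_mul, ENNReal.ofReal_mul (Nat.cast_nonneg _),
          ENNReal.ofReal_natCast, Finset.card_univ]
  rw [ENNReal.ofReal_sub _ (by positivity), ENNReal.ofReal_one, tsub_le_iff_right,
    ← measure_univ (μ := P)]
  exact (measure_univ_le_add_compl _).trans (add_le_add_right hcompl _)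

theorem statement14_general {Ω : Type*} [MeasurableSpace Ω] (P : Measure Ω) [IsProbabilityMeasure P]
    (n r : ℕ) (hn : 1 ≤ n) (s : Fin r → ℝ) (hs : ∀ l, 0 < s l)
    (ζ : Fin n → Ω → ℝ) (hζm : ∀ j, Measurable (ζ j))
    (hζd : ∀ j, Measure.map (ζ j) P = chiSqCombo r s)
    (γ : ℝ) (hγ0 : 0 ≤ γ) :
    ENNReal.ofReal
        (1 - n * Real.exp (-((∑ l, s l) ^ 2 * γ ^ 2) / (4 * ∑ l, s l ^ 2))) ≤
      P {ω | (∑ l, s l) * (1 - γ) ≤ ⨅ j, ζ j ω} := by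
  have : Nonempty (Fin n) := ⟨⟨0, hn⟩⟩
  have hevent : {ω | (∑ l, s l) * (1 - γ) ≤ ⨅ j, ζ j ω} =
      ⋂ j, {ω | (∑ l, s l) * (1 - γ) ≤ ζ j ω} := by
    ext ω
    simp only [mem_ofPred_eq, mem_iInter, le_ciInf_iff (finite_range _).bddBelow]
  rw [hevent]
  simpa using ofReal_one_sub_card_mul_le_measure_iInter P _ (exp_pos _).le fun j =>
    calc P {ω | (∑ l, s l) * (1 - γ) ≤ ζ j ω}ᶜ
        ≤ P (ζ j ⁻¹' Iic ((∑ l, s l) * (1 - γ))) :=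
          measure_mono fun ω hω => le_of_not_ge (b := ζ j ω) hω
      _ = chiSqCombo r s (Iic ((∑ l, s l) * (1 - γ))) := by
          rw [← hζd j, Measure.map_apply (hζm j) measurableSet_Iic]
      _ ≤ _ := chiSqCombo_Iic_le_exp_neg_sq (fun l => (hs l).le) hγ0

/-- If each `ζ_j` (not necessarily independent) is distributed as
`Σ_l s_l X_l²` with `X_l` i.i.d. standard Gaussians, `T = Σ_l s_l`, `σ² = Σ_l s_l²`, then
for every `0 ≤ γ ≤ 1`, `P(min_j ζ_j ≥ T(1−γ)) ≥ 1 − n exp(−T²γ²/(4σ²))`. -/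
theorem statement14 {Ω : Type*} [MeasurableSpace Ω] (P : Measure Ω) [IsProbabilityMeasure P]
    (n r : ℕ) (hn : 1 ≤ n) (hr : 1 ≤ r) (s : Fin r → ℝ) (hs : ∀ l, 0 < s l)
    (ζ : Fin n → Ω → ℝ) (hζm : ∀ j, Measurable (ζ j))
    (hζd : ∀ j, Measure.map (ζ j) P = chiSqCombo r s)
    (γ : ℝ) (hγ0 : 0 ≤ γ) (hγ1 : γ ≤ 1) :
    ENNReal.ofReal
        (1 - n * Real.exp (-((∑ l, s l) ^ 2 * γ ^ 2) / (4 * ∑ l, s l ^ 2))) ≤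
      P {ω | (∑ l, s l) * (1 - γ) ≤ ⨅ j, ζ j ω} :=
  statement14_general P n r hn s hs ζ hζm hζd γ hγ0
end

section
/- Let r ≥ 1, let s_1, …, s_r be positive reals, let X_1, …, X_r be i.i.d. standard real Gaussian random variables, and set ζ := Σ_{l=1}^r s_l·X_l², T := Σ_{l=1}^r s_l, σ := (Σ_{l=1}^r s_l²)^{1/2}, s_max := max_{1≤l≤r} s_l. Then for every ε ≥ 0: if ε ≤ σ²/s_max, then P(ζ ≤ T + ε) ≥ 1 − exp(−ε²/(8σ²)); otherwise P(ζ ≤ T + ε) ≥ 1 − exp(−ε/(8·s_max)). -/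
/-! Chernoff bound. For `a ≤ 1/4`, `E exp(a X²) = (1 - 2a)^(-1/2) ≤ exp(a + 2a²)`, so by independence
`P(ζ ≥ T + ε) ≤ exp(-tε + 2t²σ²)` for every `0 ≤ t ≤ 1/(4 s_max)`. Take `t = ε/(4σ²)`, which is
admissible exactly when `ε ≤ σ²/s_max`, and `t = 1/(4 s_max)` otherwise. -/

open MeasureTheory ProbabilityTheory Real

lemma one_le_one_sub_two_mul_mul_exp {a : ℝ} (ha : a ≤ 1 / 4) :
    1 ≤ (1 - 2 * a) * exp (2 * a + 4 * a ^ 2) := by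
  have h2a : 0 ≤ 1 - 2 * a := by linarith
  rcases le_total a 0 with hneg | hpos
  -- with `z = 2a + 4a²`: `(1 - 2a)(1 + z) = 1 - 8a³`, and `(1 - 2a)(1 + z + z²/2) - 1` is
  -- `a²(2 - 4a - 8a² - 16a³)`
  · calc (1 : ℝ) ≤ (1 - 2 * a) * (2 * a + 4 * a ^ 2 + 1) := by nlinarith [sq_nonneg a]
      _ ≤ _ := by gcongr; exact add_one_le_exp _
  · calc (1 : ℝ) ≤ (1 - 2 * a) * (1 + (2 * a + 4 * a ^ 2) + (2 * a + 4 * a ^ 2) ^ 2 / 2) := by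
          nlinarith [pow_nonneg hpos 3, pow_nonneg hpos 4, mul_nonneg (sq_nonneg a) (sub_nonneg.2 ha)]
      _ ≤ _ := by gcongr; exact quadratic_le_exp_of_nonneg (by positivity)

lemma inv_sqrt_one_sub_two_mul_le_exp {a : ℝ} (ha : a ≤ 1 / 4) :
    (√(1 - 2 * a))⁻¹ ≤ exp (a + 2 * a ^ 2) := by
  have hpos : 0 < 1 - 2 * a := by linarith
  rw [← sqrt_inv, show a + 2 * a ^ 2 = (2 * a + 4 * a ^ 2) / 2 by ring, exp_half]
  gcongr
  rw [inv_le_iff_one_le_mul₀' hpos]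
  exact one_le_one_sub_two_mul_mul_exp ha

lemma prod_inv_sqrt_one_sub_two_mul_le_exp {ι : Type*} [Fintype ι] {s : ι → ℝ} {t : ℝ}
    (hts : ∀ l, t * s l ≤ 1 / 4) :
    ∏ l, (√(1 - 2 * (t * s l)))⁻¹ ≤ exp (t * ∑ l, s l + 2 * t ^ 2 * ∑ l, s l ^ 2) :=
  calc ∏ l, (√(1 - 2 * (t * s l)))⁻¹ ≤ ∏ l, exp (t * s l + 2 * (t * s l) ^ 2) :=
        Finset.prod_le_prod (fun l _ ↦ by positivity)
          fun l _ ↦ inv_sqrt_one_sub_two_mul_le_exp (hts l)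
    _ = exp (t * ∑ l, s l + 2 * t ^ 2 * ∑ l, s l ^ 2) := by
        rw [← exp_sum, Finset.sum_add_distrib, Finset.mul_sum, Finset.mul_sum]
        simp_rw [mul_pow, mul_assoc]

lemma mgf_sq_gaussianReal {t : ℝ} (ht : t < 1 / 2) :
    mgf (fun x ↦ x ^ 2) (gaussianReal 0 1) t = (√(1 - 2 * t))⁻¹ := by
  have hb : 0 < 1 / 2 - t := by linarith
  have hexp : ∀ x : ℝ, gaussianPDFReal 0 1 x • exp (t * x ^ 2)
      = (√(2 * π))⁻¹ * exp (-(1 / 2 - t) * x ^ 2) := fun x ↦ by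
    rw [gaussianPDFReal, smul_eq_mul, mul_assoc, ← exp_add]
    congr 3 <;> simp; ring
  rw [mgf, integral_gaussianReal_eq_integral_smul one_ne_zero]
  simp_rw [hexp]
  rw [integral_const_mul, integral_gaussian, ← sqrt_inv, ← sqrt_inv, ← sqrt_mul (by positivity)]
  congr 1
  field_simp

lemma ofReal_one_sub_le_measure {Ω : Type*} [MeasurableSpace Ω] {P : Measure Ω}
    [IsProbabilityMeasure P] {A : Set Ω} {b : ℝ} (h : P.real Aᶜ ≤ b) :
    ENNReal.ofReal (1 - b) ≤ P A := by
  have hcover : 1 ≤ P.real A + P.real Aᶜ := by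
    simpa [measureReal_def, ENNReal.toReal_add, measure_ne_top] using
      ENNReal.toReal_mono (by simp [measure_ne_top]) (measure_univ_le_add_compl A (μ := P))
  rw [← ofReal_measureReal]
  exact ENNReal.ofReal_le_ofReal (by linarith)

section WeightedChiSquared

variable {Ω ι : Type*} [MeasurableSpace Ω] {P : Measure Ω}

lemma mgf_const_mul_sq_of_map_eq_gaussianReal {X : Ω → ℝ} (hXm : AEMeasurable X P)
    (hXg : P.map X = gaussianReal 0 1) {c t : ℝ} (hct : c * t < 1 / 2) :
    mgf (fun ω ↦ c * X ω ^ 2) P t = (√(1 - 2 * (c * t)))⁻¹ := by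
  rw [mgf_const_mul, ← mgf_sq_gaussianReal hct, ← hXg, mgf_map hXm (by fun_prop)]
  rfl

variable [Fintype ι] {X : ι → Ω → ℝ}

lemma mgf_weighted_sum_sq (hXm : ∀ l, Measurable (X l)) (hXi : iIndepFun X P)
    (hXg : ∀ l, P.map (X l) = gaussianReal 0 1) {s : ι → ℝ} {t : ℝ}
    (hts : ∀ l, t * s l < 1 / 2) :
    mgf (fun ω ↦ ∑ l, s l * X l ω ^ 2) P t = ∏ l, (√(1 - 2 * (t * s l)))⁻¹ := by
  have hindep : iIndepFun (fun l ω ↦ s l * X l ω ^ 2) P :=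
    hXi.comp (fun l x ↦ s l * x ^ 2) fun l ↦ by fun_prop
  have hfactor : ∀ l, mgf (fun ω ↦ s l * X l ω ^ 2) P t = (√(1 - 2 * (t * s l)))⁻¹ := fun l ↦ by
    rw [mgf_const_mul_sq_of_map_eq_gaussianReal (hXm l).aemeasurable (hXg l)
      (by linarith [hts l]), mul_comm (s l) t]
  rw [← Finset.prod_congr rfl fun l _ ↦ hfactor l, ← hindep.mgf_sum fun l ↦ by fun_prop]
  congr 1
  ext ω
  simp

theorem ofReal_one_sub_exp_le_measure_weighted_sum_sq_le [IsProbabilityMeasure P]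
    (hXm : ∀ l, Measurable (X l)) (hXi : iIndepFun X P)
    (hXg : ∀ l, P.map (X l) = gaussianReal 0 1) (s : ι → ℝ) (ε t : ℝ) (ht : 0 ≤ t)
    (hts : ∀ l, t * s l ≤ 1 / 4) :
    ENNReal.ofReal (1 - exp (-(t * ε) + 2 * t ^ 2 * ∑ l, s l ^ 2)) ≤
      P {ω | ∑ l, s l * X l ω ^ 2 ≤ ∑ l, s l + ε} := by
  have hmgf := mgf_weighted_sum_sq hXm hXi hXg fun l ↦ (hts l).trans_lt (by norm_num)
  have hmgf_pos : 0 < mgf (fun ω ↦ ∑ l, s l * X l ω ^ 2) P t :=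
    hmgf ▸ Finset.prod_pos fun l _ ↦ inv_pos.2 (sqrt_pos.2 (by linarith [hts l]))
  refine ofReal_one_sub_le_measure ?_
  calc P.real {ω | ∑ l, s l * X l ω ^ 2 ≤ ∑ l, s l + ε}ᶜ
      ≤ P.real {ω | ∑ l, s l + ε ≤ ∑ l, s l * X l ω ^ 2} :=
        measureReal_mono fun _ hω ↦ (not_le.1 (Set.notMem_ofPred_iff.1 hω)).le
    _ ≤ exp (-t * (∑ l, s l + ε)) * mgf (fun ω ↦ ∑ l, s l * X l ω ^ 2) P t :=
        measure_ge_le_exp_mul_mgf _ ht (mgf_pos_iff.1 hmgf_pos)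
    _ ≤ exp (-t * (∑ l, s l + ε)) * exp (t * ∑ l, s l + 2 * t ^ 2 * ∑ l, s l ^ 2) := by
        rw [hmgf]
        gcongr
        exact prod_inv_sqrt_one_sub_two_mul_le_exp hts
    _ = exp (-(t * ε) + 2 * t ^ 2 * ∑ l, s l ^ 2) := by rw [← exp_add]; ring_nf

end WeightedChiSquared

/-- For `ζ = Σ_l s_l X_l²` with `X_l` i.i.d. standard Gaussians,
`T = Σ_l s_l`, `σ² = Σ_l s_l²` and `s_max = max_l s_l`, for every `ε ≥ 0`:
`P(ζ ≤ T + ε) ≥ 1 − exp(−ε²/(8σ²))` if `ε ≤ σ²/s_max`, and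
`P(ζ ≤ T + ε) ≥ 1 − exp(−ε/(8 s_max))` otherwise. -/
theorem statement15 {Ω : Type*} [MeasurableSpace Ω] (P : Measure Ω) [IsProbabilityMeasure P]
    (r : ℕ) (hr : 1 ≤ r) (s : Fin r → ℝ) (hs : ∀ l, 0 < s l)
    (X : Fin r → Ω → ℝ) (hXm : ∀ l, Measurable (X l))
    (hXi : iIndepFun X P)
    (hXg : ∀ l, Measure.map (X l) P = gaussianReal 0 1)
    (ε : ℝ) (hε : 0 ≤ ε) :
    (ε ≤ (∑ l, s l ^ 2) / (⨆ l, s l) →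
      ENNReal.ofReal (1 - Real.exp (-ε ^ 2 / (8 * ∑ l, s l ^ 2))) ≤
        P {ω | ∑ l, s l * X l ω ^ 2 ≤ (∑ l, s l) + ε}) ∧
    ((∑ l, s l ^ 2) / (⨆ l, s l) < ε →
      ENNReal.ofReal (1 - Real.exp (-ε / (8 * ⨆ l, s l))) ≤
        P {ω | ∑ l, s l * X l ω ^ 2 ≤ (∑ l, s l) + ε}) := by
  set m := ⨆ l, s l
  set σ2 := ∑ l, s l ^ 2
  have hle : ∀ l, s l ≤ m := le_ciSup (Set.finite_range s).bddAbove
  have hm : 0 < m := (hs ⟨0, hr⟩).trans_le (hle _)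
  have hσ2 : 0 < σ2 := Finset.sum_pos (fun l _ ↦ pow_pos (hs l) 2) ⟨⟨0, hr⟩, Finset.mem_univ _⟩
  have chernoff := ofReal_one_sub_exp_le_measure_weighted_sum_sq_le hXm hXi hXg s ε
  constructor
  · intro hsmall
    have hεm : ε * m ≤ σ2 := (le_div_iff₀ hm).1 hsmall
    convert chernoff (ε / (4 * σ2)) (by positivity) fun l ↦ ?_ using 4
    · field_simp
      ring
    · calc ε / (4 * σ2) * s l ≤ ε / (4 * σ2) * m := by gcongr; exact hle l
        _ = ε * m / (4 * σ2) := by ring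
        _ ≤ 1 / 4 := by rw [div_le_iff₀ (by positivity)]; linarith
  · intro hlarge
    have hεm : σ2 < ε * m := (div_lt_iff₀ hm).1 hlarge
    refine le_trans ?_ (chernoff (1 / (4 * m)) (by positivity) fun l ↦ ?_)
    · gcongr
      calc -(1 / (4 * m) * ε) + 2 * (1 / (4 * m)) ^ 2 * σ2
          = -(ε / (4 * m)) + σ2 / (8 * m ^ 2) := by field_simp; ring
        _ ≤ -(ε / (4 * m)) + ε * m / (8 * m ^ 2) := by gcongr
        _ = -ε / (8 * m) := by field_simp; ring
    · calc 1 / (4 * m) * s l ≤ 1 / (4 * m) * m := by gcongr; exact hle l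
        _ = 1 / 4 := by field_simp
end

section
/- Let n ≥ 1 and r ≥ 1, let s_1, …, s_r be positive reals, and let ζ_1, …, ζ_n be real random variables on a common probability space, not necessarily independent, such that each ζ_j has the same distribution as Σ_{l=1}^r s_l·X_l² where X_1, …, X_r are i.i.d. standard real Gaussians. Then for every nonempty subset 𝒮 ⊆ {1,…,r}, writing r_𝒮 = |𝒮| and G_𝒮 = (∏_{l∈𝒮} s_l)^{1/r_𝒮}, and for every real γ, P( min_{1≤j≤n} ζ_j ≥ (r_𝒮/e)·n^{−2/r_𝒮}·G_𝒮·(1−γ) ) ≥ 1 − exp(−r_𝒮·γ/2). -/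
/-!
Chernoff bound for the lower tail: for `λ ≥ 0`,
`P(ζ ≤ t) ≤ e^{λt} E e^{-λζ} = e^{λt} ∏_l (1 + 2λ s_l)^{-1/2} ≤ e^{λt} ∏_{l ∈ 𝒮} (2λ s_l)^{-1/2}`,
and `λ = r_𝒮 / (2t)` gives the small-ball estimate `P(ζ ≤ t) ≤ (e t / (r_𝒮 G_𝒮))^{r_𝒮/2}`.
At the threshold of the theorem this is `n⁻¹ (1 - γ)^{r_𝒮/2} ≤ n⁻¹ e^{-r_𝒮 γ/2}`, and a union
bound over the `n` variables, which needs no independence, finishes the proof.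
-/

open MeasureTheory ProbabilityTheory

open Real Set Finset

theorem integral_exp_mul_sq_gaussianReal {c : ℝ} (hc : c < 1 / 2) :
    ∫ x, exp (c * x ^ 2) ∂gaussianReal 0 1 = (√(1 - 2 * c))⁻¹ := by
  have hb : 0 < 1 / 2 - c := by linarith
  rw [gaussianReal_of_var_ne_zero 0 one_ne_zero, integral_withDensity_eq_integral_toReal_smul
    (measurable_gaussianPDF 0 1) (Filter.Eventually.of_forall fun _ => ENNReal.ofReal_lt_top)]
  simp only [toReal_gaussianPDF, gaussianPDFReal, NNReal.coe_one, mul_one, sub_zero, smul_eq_mul,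
    mul_assoc, ← exp_add]
  have hexp : ∀ x : ℝ, -x ^ 2 / 2 + c * x ^ 2 = -(1 / 2 - c) * x ^ 2 := fun x => by ring
  simp_rw [hexp]
  rw [integral_const_mul, integral_gaussian, ← sqrt_inv, ← sqrt_mul (by positivity), ← sqrt_inv]
  congr 1
  field_simp

theorem measurable_sum_mul_sq {r : ℕ} (s : Fin r → ℝ) :
    Measurable fun x : Fin r → ℝ => ∑ l, s l * x l ^ 2 := by
  fun_prop

instance {r : ℕ} (s : Fin r → ℝ) : IsProbabilityMeasure (chiSqCombo r s) :=
  Measure.isProbabilityMeasure_map (measurable_sum_mul_sq s).aemeasurable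

theorem ae_nonneg_chiSqCombo {r : ℕ} {s : Fin r → ℝ} (hs : ∀ l, 0 ≤ s l) :
    ∀ᵐ x ∂chiSqCombo r s, 0 ≤ x :=
  ae_map_iff (measurable_sum_mul_sq s).aemeasurable measurableSet_Ici |>.mpr <|
    .of_forall fun _ => sum_nonneg fun l _ => mul_nonneg (hs l) (sq_nonneg _)

theorem mgf_chiSqCombo {r : ℕ} {s : Fin r → ℝ} {t : ℝ} (ht : ∀ l, 2 * t * s l < 1) :
    mgf id (chiSqCombo r s) t = ∏ l, (√(1 - 2 * t * s l))⁻¹ := by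
  rw [mgf, chiSqCombo, integral_map (measurable_sum_mul_sq s).aemeasurable (by fun_prop)]
  simp only [id, mul_sum, exp_sum, ← mul_assoc]
  rw [integral_fintype_prod_eq_prod (fun l x => exp (t * s l * x ^ 2))]
  refine prod_congr rfl fun l _ => ?_
  rw [integral_exp_mul_sq_gaussianReal (by linarith [ht l]), mul_assoc]

theorem chiSqCombo_real_Iic_le {r : ℕ} {s : Fin r → ℝ} (hs : ∀ l, 0 ≤ s l) {lam : ℝ}
    (hlam : 0 ≤ lam) (t : ℝ) :
    (chiSqCombo r s).real (Iic t) ≤ exp (lam * t) * ∏ l, (√(1 + 2 * lam * s l))⁻¹ := by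
  have hint : Integrable (fun x => exp (-lam * id x)) (chiSqCombo r s) := by
    refine (integrable_const 1).mono' (by fun_prop) ?_
    filter_upwards [ae_nonneg_chiSqCombo hs] with x hx
    rw [norm_of_nonneg (exp_pos _).le, exp_le_one_iff]
    exact mul_nonpos_of_nonpos_of_nonneg (neg_nonpos.mpr hlam) hx
  have hmgf : ∀ l, 2 * -lam * s l < 1 := fun l => by nlinarith [hs l]
  calc (chiSqCombo r s).real (Iic t) ≤ exp (- -lam * t) * mgf id (chiSqCombo r s) (-lam) :=
        measure_le_le_exp_mul_mgf t (neg_nonpos.mpr hlam) hint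
    _ = exp (lam * t) * ∏ l, (√(1 + 2 * lam * s l))⁻¹ := by
        rw [mgf_chiSqCombo hmgf, neg_neg]
        simp only [mul_neg, neg_mul, sub_neg_eq_add]

theorem prod_inv_sqrt_one_add_le {ι : Type*} [Fintype ι] {a : ι → ℝ} (ha : ∀ l, 0 ≤ a l)
    {S : Finset ι} (haS : ∀ l ∈ S, 0 < a l) :
    ∏ l, (√(1 + a l))⁻¹ ≤ ∏ l ∈ S, (√(a l))⁻¹ := by
  classical
  have hle_one : ∀ l, (√(1 + a l))⁻¹ ≤ 1 := fun l =>
    inv_le_one_of_one_le₀ (one_le_sqrt.mpr (by linarith [ha l]))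
  calc ∏ l, (√(1 + a l))⁻¹
      = (∏ l ∈ univ \ S, (√(1 + a l))⁻¹) * ∏ l ∈ S, (√(1 + a l))⁻¹ :=
        (prod_sdiff (subset_univ S)).symm
    _ ≤ ∏ l ∈ S, (√(1 + a l))⁻¹ :=
        mul_le_of_le_one_left (prod_nonneg fun _ _ => by positivity)
          (prod_le_one (fun _ _ => by positivity) fun l _ => hle_one l)
    _ ≤ ∏ l ∈ S, (√(a l))⁻¹ :=
        prod_le_prod (fun _ _ => by positivity) fun l hl =>
          inv_anti₀ (sqrt_pos.mpr (haS l hl)) (sqrt_le_sqrt (by linarith))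

theorem chiSqCombo_real_Iic_le_rpow {r : ℕ} {s : Fin r → ℝ} (hs : ∀ l, 0 ≤ s l)
    {𝒮 : Finset (Fin r)} (hs𝒮 : ∀ l ∈ 𝒮, 0 < s l) (h𝒮 : 𝒮.Nonempty) {t : ℝ} (ht : 0 < t) :
    (chiSqCombo r s).real (Iic t) ≤
      (exp 1 * t / (#𝒮 * (∏ l ∈ 𝒮, s l) ^ (1 / #𝒮 : ℝ))) ^ (#𝒮 / 2 : ℝ) := by
  set k : ℝ := (#𝒮 : ℝ)
  have hk : 0 < k := by simpa [k] using h𝒮.card_pos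
  have hlam : 0 ≤ k / (2 * t) := by positivity
  have hprod : 0 < ∏ l ∈ 𝒮, s l := prod_pos hs𝒮
  calc (chiSqCombo r s).real (Iic t)
      ≤ exp (k / (2 * t) * t) * ∏ l, (√(1 + 2 * (k / (2 * t)) * s l))⁻¹ :=
        chiSqCombo_real_Iic_le hs hlam t
    _ ≤ exp (k / 2) * ∏ l ∈ 𝒮, (√(k / t * s l))⁻¹ := by
        have h2 : ∀ l, 2 * (k / (2 * t)) * s l = k / t * s l := fun l => by field_simp
        simp only [h2]
        rw [show k / (2 * t) * t = k / 2 by field_simp]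
        exact mul_le_mul_of_nonneg_left (prod_inv_sqrt_one_add_le
          (fun l => by have := hs l; positivity) fun l hl => by have := hs𝒮 l hl; positivity)
          (exp_pos _).le
    _ = (exp 1 * t / (k * (∏ l ∈ 𝒮, s l) ^ (1 / k))) ^ (k / 2) := by
        have hL : 0 < exp (k / 2) * ∏ l ∈ 𝒮, (√(k / t * s l))⁻¹ :=
          mul_pos (exp_pos _) (prod_pos fun l hl => by have := hs𝒮 l hl; positivity)
        have hR : 0 < (exp 1 * t / (k * (∏ l ∈ 𝒮, s l) ^ (1 / k))) ^ (k / 2) := by positivity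
        refine log_injOn_pos hL hR ?_
        rw [log_mul (exp_pos _).ne' (prod_pos fun l hl => by have := hs𝒮 l hl; positivity).ne',
          log_prod (fun l hl => by have := hs𝒮 l hl; positivity), log_rpow (by positivity),
          log_div (by positivity) (by positivity), log_mul (by positivity) (by positivity),
          log_mul (by positivity) (by positivity), log_rpow hprod, log_exp, log_exp,
          log_prod (fun l hl => (hs𝒮 l hl).ne')]
        have hterm : ∀ l ∈ 𝒮, log (√(k / t * s l))⁻¹ = (log t - log k - log (s l)) / 2 :=
          fun l hl => by
            rw [log_inv, log_sqrt (by have := hs𝒮 l hl; positivity),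
              log_mul (by positivity) (hs𝒮 l hl).ne', log_div hk.ne' ht.ne']
            ring
        rw [sum_congr rfl hterm, ← sum_div, sum_sub_distrib, sum_const]
        simp only [nsmul_eq_mul, k]
        field_simp
        ring

theorem one_sub_rpow_le_exp {γ a : ℝ} (hγ : γ ≤ 1) (ha : 0 ≤ a) :
    (1 - γ) ^ a ≤ exp (-(a * γ)) := by
  calc (1 - γ) ^ a ≤ exp (-γ) ^ a :=
        rpow_le_rpow (by linarith) (by linarith [add_one_le_exp (-γ)]) ha
    _ = exp (-(a * γ)) := by rw [← exp_mul]; ring_nf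

theorem chiSqCombo_Iio_le {r : ℕ} {s : Fin r → ℝ} (hs : ∀ l, 0 ≤ s l)
    {𝒮 : Finset (Fin r)} (hs𝒮 : ∀ l ∈ 𝒮, 0 < s l) (h𝒮 : 𝒮.Nonempty) {N : ℝ} (hN : 0 < N)
    (γ : ℝ) :
    chiSqCombo r s (Iio ((#𝒮 : ℝ) / exp 1 * N ^ (-(2 : ℝ) / #𝒮) *
        (∏ l ∈ 𝒮, s l) ^ ((1 : ℝ) / #𝒮) * (1 - γ))) ≤
      ENNReal.ofReal (N⁻¹ * exp (-((#𝒮 : ℝ) * γ) / 2)) := by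
  set k : ℝ := (#𝒮 : ℝ)
  set G : ℝ := (∏ l ∈ 𝒮, s l) ^ ((1 : ℝ) / k)
  have hk : 0 < k := by simpa [k] using h𝒮.card_pos
  have hG : 0 < G := rpow_pos_of_pos (prod_pos hs𝒮) _
  rcases lt_or_ge γ 1 with hγ | hγ
  · have hT : 0 < k / exp 1 * N ^ (-2 / k) * G * (1 - γ) := by
      have := rpow_pos_of_pos hN (-2 / k)
      have : 0 < 1 - γ := by linarith
      positivity
    calc _ ≤ chiSqCombo r s (Iic (k / exp 1 * N ^ (-2 / k) * G * (1 - γ))) :=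
          measure_mono Iio_subset_Iic_self
      _ = ENNReal.ofReal ((chiSqCombo r s).real (Iic (k / exp 1 * N ^ (-2 / k) * G * (1 - γ)))) :=
          (ofReal_measureReal (measure_ne_top _ _)).symm
      _ ≤ ENNReal.ofReal (N⁻¹ * exp (-(k * γ) / 2)) := by
          refine ENNReal.ofReal_le_ofReal ((chiSqCombo_real_Iic_le_rpow hs hs𝒮 h𝒮 hT).trans ?_)
          have hbase : exp 1 * (k / exp 1 * N ^ (-2 / k) * G * (1 - γ)) / (k * G) =
              N ^ (-2 / k) * (1 - γ) := by
            field_simp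
          rw [hbase, mul_rpow (rpow_nonneg hN.le _) (by linarith), ← rpow_mul hN.le,
            show -2 / k * (k / 2) = -1 by field_simp, rpow_neg_one,
            show -(k * γ) / 2 = -(k / 2 * γ) by ring]
          exact mul_le_mul_of_nonneg_left (one_sub_rpow_le_exp hγ.le (by positivity))
            (inv_nonneg.mpr hN.le)
  · have hT : k / exp 1 * N ^ (-2 / k) * G * (1 - γ) ≤ 0 :=
      mul_nonpos_of_nonneg_of_nonpos (by have := rpow_nonneg hN.le (-2 / k); positivity)
        (by linarith)
    have hnull := ae_iff.mp (ae_nonneg_chiSqCombo hs)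
    simp only [not_le] at hnull
    exact (measure_mono_null (Iio_subset_Iio hT) hnull).trans_le zero_le

theorem one_sub_sum_le_measure_le_iInf {Ω ι : Type*} [MeasurableSpace Ω] [Fintype ι]
    [Nonempty ι] (P : Measure Ω) [IsProbabilityMeasure P] (ζ : ι → Ω → ℝ) (T : ℝ) :
    1 - ∑ j, P {ω | ζ j ω < T} ≤ P {ω | T ≤ ⨅ j, ζ j ω} := by
  set A := {ω | T ≤ ⨅ j, ζ j ω}
  have hcompl : Aᶜ ⊆ ⋃ j, {ω | ζ j ω < T} := fun ω hω => by
    simp only [A, mem_compl_iff, mem_ofPred_eq, not_le] at hω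
    simpa using exists_lt_of_ciInf_lt hω
  have hcover : 1 ≤ P A + P Aᶜ :=
    calc 1 = P (A ∪ Aᶜ) := by rw [union_compl_self, measure_univ]
      _ ≤ P A + P Aᶜ := measure_union_le _ _
  calc 1 - ∑ j, P {ω | ζ j ω < T} ≤ 1 - P Aᶜ :=
        tsub_le_tsub_left ((measure_mono hcompl).trans (measure_iUnion_fintype_le _ _)) 1
    _ ≤ P A := tsub_le_iff_right.mpr hcover

theorem statement16_general {Ω : Type*} [MeasurableSpace Ω] (P : Measure Ω) [IsProbabilityMeasure P]
    (n r : ℕ) (hn : 1 ≤ n) (s : Fin r → ℝ) (hs : ∀ l, 0 < s l)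
    (ζ : Fin n → Ω → ℝ) (hζm : ∀ j, Measurable (ζ j))
    (hζd : ∀ j, Measure.map (ζ j) P = chiSqCombo r s)
    (𝒮 : Finset (Fin r)) (γ : ℝ) :
    ENNReal.ofReal (1 - Real.exp (-((𝒮.card : ℝ) * γ) / 2)) ≤
      P {ω |
        (𝒮.card : ℝ) / Real.exp 1 * (n : ℝ) ^ (-(2 : ℝ) / 𝒮.card) *
            (∏ l ∈ 𝒮, s l) ^ ((1 : ℝ) / 𝒮.card) * (1 - γ) ≤
          ⨅ j, ζ j ω} := by
  set x := exp (-((#𝒮 : ℝ) * γ) / 2)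
  set T := (#𝒮 : ℝ) / exp 1 * (n : ℝ) ^ (-(2 : ℝ) / #𝒮) *
    (∏ l ∈ 𝒮, s l) ^ ((1 : ℝ) / #𝒮) * (1 - γ)
  rcases le_or_gt (1 - x) 0 with hx | hx
  · rw [ENNReal.ofReal_of_nonpos hx]
    exact zero_le
  have h𝒮 : 𝒮.Nonempty := Finset.nonempty_iff_ne_empty.mpr fun h => by simp [x, h] at hx
  have : Nonempty (Fin n) := ⟨⟨0, hn⟩⟩
  have hN : (0 : ℝ) < n := by exact_mod_cast hn
  have htail : ∀ j, P {ω | ζ j ω < T} ≤ ENNReal.ofReal ((n : ℝ)⁻¹ * x) := fun j => by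
    change P (ζ j ⁻¹' Iio T) ≤ _
    rw [← Measure.map_apply (hζm j) measurableSet_Iio, hζd j]
    exact chiSqCombo_Iio_le (fun l => (hs l).le) (fun l _ => hs l) h𝒮 hN γ
  calc ENNReal.ofReal (1 - x) = 1 - ∑ _j : Fin n, ENNReal.ofReal ((n : ℝ)⁻¹ * x) := by
        rw [sum_const, card_univ, Fintype.card_fin, nsmul_eq_mul, ← ENNReal.ofReal_natCast,
          ← ENNReal.ofReal_mul hN.le, mul_inv_cancel_left₀ hN.ne',
          ENNReal.ofReal_sub _ (exp_pos _).le, ENNReal.ofReal_one]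
    _ ≤ 1 - ∑ j, P {ω | ζ j ω < T} := tsub_le_tsub_left (sum_le_sum fun j _ => htail j) 1
    _ ≤ P {ω | T ≤ ⨅ j, ζ j ω} := one_sub_sum_le_measure_le_iInf P ζ T

/-- If each `ζ_j` (not necessarily independent) is distributed as
`Σ_l s_l X_l²` with `X_l` i.i.d. standard Gaussians, then for every nonempty `𝒮 ⊆ {1, …, r}`
and every real `γ`,
`P(min_j ζ_j ≥ (|𝒮|/e) n^{-2/|𝒮|} G_𝒮 (1−γ)) ≥ 1 − exp(−|𝒮|γ/2)`. -/
theorem statement16 {Ω : Type*} [MeasurableSpace Ω] (P : Measure Ω) [IsProbabilityMeasure P]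
    (n r : ℕ) (hn : 1 ≤ n) (hr : 1 ≤ r) (s : Fin r → ℝ) (hs : ∀ l, 0 < s l)
    (ζ : Fin n → Ω → ℝ) (hζm : ∀ j, Measurable (ζ j))
    (hζd : ∀ j, Measure.map (ζ j) P = chiSqCombo r s)
    (𝒮 : Finset (Fin r)) (h𝒮ne : 𝒮.Nonempty) (γ : ℝ) :
    ENNReal.ofReal (1 - Real.exp (-((𝒮.card : ℝ) * γ) / 2)) ≤
      P {ω |
        (𝒮.card : ℝ) / Real.exp 1 * (n : ℝ) ^ (-(2 : ℝ) / 𝒮.card) *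
            (∏ l ∈ 𝒮, s l) ^ ((1 : ℝ) / 𝒮.card) * (1 - γ) ≤
          ⨅ j, ζ j ω} :=
  statement16_general P n r hn s hs ζ hζm hζd 𝒮 γ
end
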